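/- arXiv:2009.07243 — 6 statements merged into one kernel-verified Lean document; each statement's English description precedes it below -/
import Mathlib

section
/- Removing the smallest-probability element from a finite probability distribution and renormalizing strictly decreases the Shannon entropy. Precisely: let p : Fin n → ℝ (n ≥ 2) be a probability vector with all p i > 0, sorted so that p i ≥ p j whenever i ≤ j, and with p (n-1) strictly smaller than every other entry. Define q i = p i / (1 - p (n-1)) for i < n-1. Then H(q) < H(p), where H(p) = -∑ p i * log (p i). -/
/-!
Write `t` for the smallest probability and `c = 1 - t`. Splitting off the normalizing factor
gives `H(q) = (H(p) + t log t) / c + log c`, so `H(q) < H(p)` amounts to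
`t (H(p) + log t) + c log c < 0`. Since every `p i ≥ t`, `H(p) = -∑ p i log p i ≤ -log t`,
and `c log c < 0` because `0 < c < 1`.
-/

open Finset Real

/-- Shannon entropy of a finite distribution (natural log, `0 log 0 = 0`
since `Real.log 0 = 0`). -/
noncomputable def shannonEntropy {n : ℕ} (p : Fin n → ℝ) : ℝ :=
  -∑ i, p i * Real.log (p i)

lemma shannonEntropy_eq_sum_negMulLog {n : ℕ} (p : Fin n → ℝ) :
    shannonEntropy p = ∑ i, negMulLog (p i) := by
  simp only [shannonEntropy, negMulLog_eq_neg, sum_neg_distrib]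

section RenormErase

variable {ι : Type*} [Fintype ι]

lemma sum_negMulLog_le_neg_log_of_le {p : ι → ℝ} (hsum : ∑ i, p i = 1) {t : ℝ} (ht : 0 < t)
    (hle : ∀ i, t ≤ p i) : ∑ i, negMulLog (p i) ≤ -log t :=
  calc ∑ i, negMulLog (p i) ≤ ∑ i, -p i * log t :=
        sum_le_sum fun i _ => by
          simp only [negMulLog, neg_mul, neg_le_neg_iff]
          exact mul_le_mul_of_nonneg_left (log_le_log ht (hle i)) (ht.le.trans (hle i))
    _ = -log t := by rw [← sum_mul, sum_neg_distrib, hsum, neg_one_mul]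

variable [DecidableEq ι]

/-- The distribution `p` conditioned on the outcome `j` not occurring. -/
noncomputable def renormErase (p : ι → ℝ) (j : ι) : ι → ℝ :=
  fun i => if i = j then 0 else p i / (1 - p j)

lemma sum_negMulLog_renormErase {p : ι → ℝ} (hsum : ∑ i, p i = 1) {j : ι} (hj : p j ≠ 1) :
    ∑ i, negMulLog (renormErase p j i) =
      (∑ i, negMulLog (p i) - negMulLog (p j)) / (1 - p j) + log (1 - p j) := by
  set c := 1 - p j
  have hc : c ≠ 0 := sub_ne_zero.2 hj.symm
  have hmass : ∑ i ∈ univ.erase j, p i = c := by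
    rw [sum_erase_eq_sub (mem_univ j), hsum]
  have hterm : ∀ i ∈ univ.erase j, negMulLog (renormErase p j i) =
      c⁻¹ * negMulLog (p i) + p i * negMulLog c⁻¹ := fun i hi => by
    rw [renormErase, if_neg (ne_of_mem_erase hi), div_eq_mul_inv, negMulLog_mul]
  rw [← sum_erase_add univ _ (mem_univ j), sum_congr rfl hterm, sum_add_distrib, ← mul_sum,
    ← sum_mul, hmass, sum_erase_eq_sub (mem_univ j)]
  simp only [renormErase, if_pos, negMulLog, log_inv]
  field_simp
  ring

lemma sum_negMulLog_renormErase_lt {p : ι → ℝ} (hsum : ∑ i, p i = 1) {j : ι}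
    (hmin : ∀ i, p j ≤ p i) (hj₀ : 0 < p j) (hj₁ : p j < 1) :
    ∑ i, negMulLog (renormErase p j i) < ∑ i, negMulLog (p i) := by
  rw [sum_negMulLog_renormErase hsum hj₁.ne]
  set H := ∑ i, negMulLog (p i)
  set t := p j
  have hH : t * H ≤ t * -log t :=
    mul_le_mul_of_nonneg_left (sum_negMulLog_le_neg_log_of_le hsum hj₀ hmin) hj₀.le
  have hc : (1 - t) * log (1 - t) < 0 := mul_log_neg (by linarith) (by linarith)
  rw [div_add' _ _ _ (by linarith), div_lt_iff₀ (by linarith), negMulLog]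
  nlinarith

end RenormErase

theorem entropy_remove_smallest_general {n : ℕ} (hn : 2 ≤ n) (p : Fin n → ℝ)
    (last : Fin n)
    (hpos : ∀ i, 0 < p i) (hsum : ∑ i, p i = 1)
    (hmin : ∀ i : Fin n, i ≠ last → p last < p i)
    (q : Fin n → ℝ)
    (hq : ∀ i : Fin n, q i = if i = last then 0 else p i / (1 - p last)) :
    shannonEntropy q < shannonEntropy p := by
  obtain ⟨i, hi⟩ := Fintype.exists_ne_of_one_lt_card (by rw [Fintype.card_fin]; exact hn) last
  have hle : ∀ k, p last ≤ p k := fun k => by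
    rcases eq_or_ne k last with rfl | hk
    exacts [le_rfl, (hmin k hk).le]
  have hlt : p last < 1 := by
    have : p last + p i ≤ 1 := by
      rw [← sum_pair hi.symm, ← hsum]
      exact sum_le_sum_of_subset_of_nonneg (subset_univ _) fun k _ _ => (hpos k).le
    linarith [hpos i]
  rw [show q = renormErase p last from funext hq, shannonEntropy_eq_sum_negMulLog,
    shannonEntropy_eq_sum_negMulLog]
  exact sum_negMulLog_renormErase_lt hsum hle (hpos last) hlt

/-- Removing the smallest-probability element of a probability vector and
renormalizing strictly decreases Shannon entropy. -/
theorem entropy_remove_smallest {n : ℕ} (hn : 2 ≤ n) (p : Fin n → ℝ)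
    (last : Fin n) (hlast : (last : ℕ) = n - 1)
    (hpos : ∀ i, 0 < p i) (hsum : ∑ i, p i = 1)
    (hsorted : ∀ i j : Fin n, i ≤ j → p j ≤ p i)
    (hmin : ∀ i : Fin n, i ≠ last → p last < p i)
    (q : Fin n → ℝ)
    (hq : ∀ i : Fin n, q i = if i = last then 0 else p i / (1 - p last)) :
    shannonEntropy q < shannonEntropy p :=
  entropy_remove_smallest_general hn p last hpos hsum hmin q hq
end

section
/- The entropy of the tempered distribution is strictly decreasing in α on (0, ∞) whenever p is not uniform: for a strictly positive probability vector p : Fin n → ℝ that is not constant, the function α ↦ H(p^α), where p^α_i = p_i^α / ∑_j p_j^α, has derivative -α · Var_{p^α}(e), with e_i = -log p_i, which is strictly negative for α > 0. -/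
/-! Writing `Z(a) = ∑ p_j^a` and `⟨f⟩_a` for the mean of `f` under `p^a`, one has
`H(p^a) = log Z(a) - a ⟨log p⟩_a`. Since `(log Z)' = ⟨log p⟩_a` and
`⟨log p⟩_a' = Var_{p^a}(log p)`, the first-order terms cancel and the derivative is
`-a · Var_{p^a}(-log p)`. The variance is positive because `p^a` has full support and
`log p` is not constant. -/

open Finset Real

/-- The tempered (Gibbs) transform of `p` with inverse temperature `α`. -/
noncomputable def tempered {n : ℕ} (p : Fin n → ℝ) (α : ℝ) : Fin n → ℝ :=
  fun i => p i ^ α / ∑ j, p j ^ α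

/-- Variance of `e` under the distribution `q`. -/
noncomputable def varUnder {n : ℕ} (q e : Fin n → ℝ) : ℝ :=
  (∑ i, q i * e i ^ 2) - (∑ i, q i * e i) ^ 2

section Variance

variable {n : ℕ} {q : Fin n → ℝ}

theorem varUnder_eq_sum_mul_sq_sub_mean (hq : ∑ i, q i = 1) (e : Fin n → ℝ) :
    varUnder q e = ∑ i, q i * (e i - ∑ j, q j * e j) ^ 2 := by
  set μ := ∑ j, q j * e j
  have hexpand : ∀ i,
      q i * (e i - μ) ^ 2 = q i * e i ^ 2 - 2 * μ * (q i * e i) + μ ^ 2 * q i :=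
    fun i => by ring
  rw [Finset.sum_congr rfl fun i _ => hexpand i, Finset.sum_add_distrib, Finset.sum_sub_distrib,
    ← Finset.mul_sum, ← Finset.mul_sum, hq, varUnder]
  ring

theorem varUnder_pos (hq : ∀ i, 0 < q i) (hq1 : ∑ i, q i = 1) {e : Fin n → ℝ}
    (he : ∃ i j, e i ≠ e j) : 0 < varUnder q e := by
  rw [varUnder_eq_sum_mul_sq_sub_mean hq1]
  obtain ⟨k, hk⟩ : ∃ k, e k ≠ ∑ j, q j * e j := by
    obtain ⟨i, j, hij⟩ := he
    by_contra! h
    exact hij ((h i).trans (h j).symm)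
  refine Finset.sum_pos' (fun i _ => by have := hq i; positivity) ⟨k, mem_univ k, ?_⟩
  have := sub_ne_zero.mpr hk
  have := hq k
  positivity

end Variance

section Tempered

variable {n : ℕ} {p : Fin n → ℝ}

theorem sum_rpow_pos [Nonempty (Fin n)] (hp : ∀ i, 0 < p i) (a : ℝ) : 0 < ∑ j, p j ^ a :=
  Finset.sum_pos (fun j _ => rpow_pos_of_pos (hp j) a) univ_nonempty

theorem tempered_pos [Nonempty (Fin n)] (hp : ∀ i, 0 < p i) (a : ℝ) (i : Fin n) :
    0 < tempered p a i :=
  div_pos (rpow_pos_of_pos (hp i) a) (sum_rpow_pos hp a)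

theorem sum_tempered [Nonempty (Fin n)] (hp : ∀ i, 0 < p i) (a : ℝ) :
    ∑ i, tempered p a i = 1 := by
  simp only [tempered, ← Finset.sum_div]
  exact div_self (sum_rpow_pos hp a).ne'

theorem shannonEntropy_tempered [Nonempty (Fin n)] (hp : ∀ i, 0 < p i) (a : ℝ) :
    shannonEntropy (tempered p a) =
      log (∑ j, p j ^ a) - a * ((∑ j, p j ^ a * log (p j)) / ∑ j, p j ^ a) := by
  have hZ := (sum_rpow_pos hp a).ne'
  have hterm : ∀ i, p i ^ a / (∑ j, p j ^ a) * log (p i ^ a / ∑ j, p j ^ a) =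
      a * (p i ^ a * log (p i) / ∑ j, p j ^ a) -
        log (∑ j, p j ^ a) * (p i ^ a / ∑ j, p j ^ a) := by
    intro i
    rw [log_div (rpow_pos_of_pos (hp i) a).ne' hZ, log_rpow (hp i)]
    ring
  simp only [shannonEntropy, tempered]
  rw [Finset.sum_congr rfl fun i _ => hterm i, Finset.sum_sub_distrib, ← Finset.mul_sum,
    ← Finset.mul_sum, ← Finset.sum_div, ← Finset.sum_div, div_self hZ]
  ring

theorem varUnder_tempered_neg_log (a : ℝ) :
    varUnder (tempered p a) (fun i => -log (p i)) =
      (∑ j, p j ^ a * log (p j) ^ 2) / (∑ j, p j ^ a) -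
        ((∑ j, p j ^ a * log (p j)) / ∑ j, p j ^ a) ^ 2 := by
  simp only [varUnder, tempered, Finset.sum_div, neg_sq, mul_neg, Finset.sum_neg_distrib,
    div_mul_eq_mul_div]

theorem hasDerivAt_sum_rpow_mul {ι : Type*} [Fintype ι] {w : ι → ℝ} (hw : ∀ i, 0 < w i)
    (f : ι → ℝ) (a : ℝ) :
    HasDerivAt (fun b => ∑ j, w j ^ b * f j) (∑ j, w j ^ a * log (w j) * f j) a :=
  HasDerivAt.fun_sum fun j _ => (hasStrictDerivAt_const_rpow (hw j) a).hasDerivAt.mul_const (f j)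

theorem hasDerivAt_shannonEntropy_tempered [Nonempty (Fin n)] (hp : ∀ i, 0 < p i) (a : ℝ) :
    HasDerivAt (fun b => shannonEntropy (tempered p b))
      (-a * varUnder (tempered p a) (fun i => -log (p i))) a := by
  have hZ := (sum_rpow_pos hp a).ne'
  have hZ' : HasDerivAt (fun b => ∑ j, p j ^ b) (∑ j, p j ^ a * log (p j)) a := by
    simpa using hasDerivAt_sum_rpow_mul hp (fun _ => 1) a
  have hG' : HasDerivAt (fun b => ∑ j, p j ^ b * log (p j))
      (∑ j, p j ^ a * log (p j) ^ 2) a := by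
    simpa [mul_assoc, ← sq] using hasDerivAt_sum_rpow_mul hp (fun j => log (p j)) a
  rw [funext (shannonEntropy_tempered hp), varUnder_tempered_neg_log]
  refine ((hZ'.log hZ).sub ((hasDerivAt_id a).mul (hG'.div hZ' hZ))).congr_deriv ?_
  simp only [id, Pi.div_apply]
  field_simp
  ring

end Tempered

theorem entropy_tempered_hasDerivAt_general {n : ℕ} (p : Fin n → ℝ) (α : ℝ)
    (hpos : ∀ i, 0 < p i)
    (hne : ∃ i j : Fin n, p i ≠ p j) (hα : 0 < α) :
    HasDerivAt (fun a : ℝ => shannonEntropy (tempered p a))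
      (-α * varUnder (tempered p α) (fun i => -Real.log (p i))) α ∧
    -α * varUnder (tempered p α) (fun i => -Real.log (p i)) < 0 := by
  obtain ⟨i, j, hij⟩ := hne
  have : Nonempty (Fin n) := ⟨i⟩
  have hlog : -log (p i) ≠ -log (p j) := fun h =>
    hij (log_injOn_pos (hpos i) (hpos j) (neg_inj.mp h))
  have hvar : 0 < varUnder (tempered p α) (fun k => -log (p k)) :=
    varUnder_pos (tempered_pos hpos α) (sum_tempered hpos α) ⟨i, j, hlog⟩
  exact ⟨hasDerivAt_shannonEntropy_tempered hpos α,
    by simpa only [neg_mul, neg_lt_zero] using mul_pos hα hvar⟩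

/-- The entropy of the tempered distribution has derivative
`-α · Var_{p^α}(-log p)`, which is strictly negative for `α > 0` when `p` is
not uniform. -/
theorem entropy_tempered_hasDerivAt {n : ℕ} (p : Fin n → ℝ) (α : ℝ)
    (hpos : ∀ i, 0 < p i) (hsum : ∑ i, p i = 1)
    (hne : ∃ i j : Fin n, p i ≠ p j) (hα : 0 < α) :
    HasDerivAt (fun a : ℝ => shannonEntropy (tempered p a))
      (-α * varUnder (tempered p α) (fun i => -Real.log (p i))) α ∧
    -α * varUnder (tempered p α) (fun i => -Real.log (p i)) < 0 :=
  entropy_tempered_hasDerivAt_general p α hpos hne hα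
end

section
/- Nucleus truncation strictly decreases entropy when it actually truncates positive mass: let p : Fin n → ℝ be a strictly positive, strictly decreasing probability vector, 0 < P < 1 such that the nucleus set {i : ∑_{j<i} p_j < P} is a proper subset of Fin n, and let p̂ be the renormalized truncation. Then H(p̂) < H(p). -/
open Finset Real

/-- Nucleus truncation strictly decreases entropy when it truncates positive
mass. -/
theorem entropy_nucleus_lt {n : ℕ} (p : Fin n → ℝ) (P : ℝ)
    (hpos : ∀ i, 0 < p i) (hsum : ∑ i, p i = 1)
    (hdec : ∀ i j : Fin n, i < j → p j < p i)
    (hP0 : 0 < P) (hP1 : P < 1)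
    (hproper : ∃ i : Fin n,
      ¬ (∑ j ∈ Finset.univ.filter (fun j : Fin n => j < i), p j < P))
    (p' : Fin n → ℝ)
    (hp' : ∀ i : Fin n, p' i =
      if ∑ j ∈ Finset.univ.filter (fun j : Fin n => j < i), p j < P then p i
      else 0)
    (phat : Fin n → ℝ)
    (hphat : ∀ i : Fin n, phat i = p' i / ∑ j, p' j) :
    shannonEntropy phat < shannonEntropy p := by
  classical
  set pre : Fin n → ℝ := fun i =>
    ∑ j ∈ Finset.univ.filter (fun j : Fin n => j < i), p j with hpredef
  set S : Finset (Fin n) := Finset.univ.filter (fun i => pre i < P) with hSdef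
  obtain ⟨w, hw⟩ := hproper
  -- monotonicity of prefix sums
  have hpre_mono : ∀ i j : Fin n, i ≤ j → pre i ≤ pre j := by
    intro i j hij
    apply Finset.sum_le_sum_of_subset_of_nonneg
    · intro x hx
      simp only [Finset.mem_filter, Finset.mem_univ, true_and] at hx ⊢
      exact lt_of_lt_of_le hx hij
    · intro x _ _; exact (hpos x).le
  -- T = complement of S within the filter
  have hwT : ¬ pre w < P := hw
  -- the minimal excluded index
  have hTne : (Finset.univ.filter (fun i : Fin n => ¬ pre i < P)).Nonempty :=
    ⟨w, by simp only [Finset.mem_filter, Finset.mem_univ, true_and]; exact hwT⟩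
  set T : Finset (Fin n) := Finset.univ.filter (fun i : Fin n => ¬ pre i < P) with hTdef
  set k : Fin n := T.min' hTne with hkdef
  have hkT : k ∈ T := T.min'_mem hTne
  have hkpre : ¬ pre k < P := by
    have := hkT; rw [hTdef] at this; simpa using this
  -- every element of S is < k
  have hSlt : ∀ i ∈ S, i < k := by
    intro i hi
    rw [hSdef] at hi; simp only [Finset.mem_filter, Finset.mem_univ, true_and] at hi
    by_contra hik
    push_neg at hik
    exact hkpre (lt_of_le_of_lt (hpre_mono k i hik) hi)
  -- every element of T is ≥ k
  have hTge : ∀ i ∈ T, k ≤ i := fun i hi => T.min'_le i hi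
  -- S is nonempty: index 0 belongs to it
  have hn : 0 < n := Fin.pos k
  have hSne : S.Nonempty := by
    refine ⟨⟨0, hn⟩, ?_⟩
    rw [hSdef]
    simp only [Finset.mem_filter, Finset.mem_univ, true_and]
    have : pre ⟨0, hn⟩ = 0 := by
      rw [hpredef]
      apply Finset.sum_eq_zero
      intro x hx
      simp only [Finset.mem_filter, Finset.mem_univ, true_and] at hx
      exact absurd hx (by simp [Fin.lt_def])
    rw [this]; exact hP0
  set Z : ℝ := ∑ i ∈ S, p i with hZdef
  have hZpos : 0 < Z := Finset.sum_pos (fun i _ => hpos i) hSne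
  -- the total splits
  have hsplit : Z + ∑ i ∈ T, p i = 1 := by
    rw [hZdef, ← hsum, hSdef, hTdef]
    exact Finset.sum_filter_add_sum_filter_not _ _ _
  have hTsum_pos : 0 < ∑ i ∈ T, p i := Finset.sum_pos (fun i _ => hpos i) ⟨k, hkT⟩
  have hZlt1 : Z < 1 := by linarith
  -- p' values
  have hp'S : ∀ i ∈ S, p' i = p i := by
    intro i hi
    rw [hSdef] at hi; simp only [Finset.mem_filter, Finset.mem_univ, true_and] at hi
    rw [hp' i, if_pos hi]
  have hp'T : ∀ i : Fin n, i ∉ S → p' i = 0 := by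
    intro i hi
    rw [hSdef] at hi; simp only [Finset.mem_filter, Finset.mem_univ, true_and] at hi
    rw [hp' i, if_neg hi]
  have hp'sum : ∑ j, p' j = Z := by
    have e1 : ∑ j ∈ S, p' j = ∑ j, p' j :=
      Finset.sum_subset (Finset.subset_univ S) (fun x _ hx => hp'T x hx)
    rw [← e1, Finset.sum_congr rfl hp'S, hZdef]
  set A : ℝ := ∑ i ∈ S, p i * Real.log (p i) with hAdef
  set B : ℝ := ∑ i ∈ T, p i * Real.log (p i) with hBdef
  -- entropy of p splits
  have hHp : shannonEntropy p = -(A + B) := by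
    rw [shannonEntropy, hAdef, hBdef, hSdef, hTdef]
    rw [← Finset.sum_filter_add_sum_filter_not Finset.univ (fun i => pre i < P)
      (fun i => p i * Real.log (p i))]
  -- entropy of phat
  have hHphat : shannonEntropy phat = -((A - Z * Real.log Z) / Z) := by
    rw [shannonEntropy]
    congr 1
    have hterm : ∀ i : Fin n, phat i * Real.log (phat i) =
        if pre i < P then (p i * Real.log (p i) - p i * Real.log Z) / Z else 0 := by
      intro i
      by_cases hi : pre i < P
      · have hiS : i ∈ S := by rw [hSdef]; simp [hi]
        rw [if_pos hi, hphat i, hp'sum, hp'S i hiS,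
          Real.log_div (ne_of_gt (hpos i)) (ne_of_gt hZpos)]
        field_simp
      · have hiS : i ∉ S := by rw [hSdef]; simp [hi]
        rw [if_neg hi, hphat i, hp'T i hiS]
        simp
    rw [Finset.sum_congr rfl (fun i _ => hterm i), Finset.sum_ite, Finset.sum_const_zero,
      add_zero, ← Finset.sum_div, Finset.sum_sub_distrib, ← Finset.sum_mul]
  -- key inequalities
  set L : ℝ := Real.log (p k) with hLdef
  have hA : Z * L < A := by
    have : ∑ i ∈ S, p i * L < A := by
      rw [hAdef]
      apply Finset.sum_lt_sum_of_nonempty hSne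
      intro i hi
      have hik : i < k := hSlt i hi
      have : p k < p i := hdec i k hik
      exact mul_lt_mul_of_pos_left (Real.log_lt_log (hpos k) this) (hpos i)
    calc Z * L = ∑ i ∈ S, p i * L := by rw [hZdef, Finset.sum_mul]
    _ < A := this
  have hB : B ≤ (1 - Z) * L := by
    have h1 : B ≤ ∑ i ∈ T, p i * L := by
      rw [hBdef]
      apply Finset.sum_le_sum
      intro i hi
      have hki : k ≤ i := hTge i hi
      have hpi : p i ≤ p k := by
        rcases lt_or_eq_of_le hki with h | h
        · exact (hdec k i h).le
        · rw [h]
      exact mul_le_mul_of_nonneg_left (Real.log_le_log (hpos i) hpi) (hpos i).le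
    have h2 : ∑ i ∈ T, p i * L = (1 - Z) * L := by
      rw [← Finset.sum_mul]
      congr 1
      linarith
    linarith
  have hlogZ : Real.log Z < 0 := Real.log_neg hZpos hZlt1
  rw [hHp, hHphat, neg_lt_neg_iff, lt_div_iff₀ hZpos]
  nlinarith [mul_pos (sub_pos.2 hA) (sub_pos.2 hZlt1),
    mul_le_mul_of_nonneg_left hB hZpos.le,
    mul_neg_of_pos_of_neg hZpos hlogZ]
end

section
/- Tempered top-k strictly decreases entropy: for p : Fin n → ℝ strictly positive, strictly decreasing, with n ≥ 2, α ≥ 1, 1 ≤ K < n (and (α, K) ≠ (1, n)), the distribution p̂_i = p_i^α·[i<K]/∑_{j<K} p_j^α satisfies H(p̂) < H(p). -/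
/-!
Let `q` be `p` restricted to the top `K` indices and renormalised; then `p̂ = q^α / ∑ q^α`.
Tempering: by Gibbs' inequality `H(p̂)` is at most the cross entropy `-∑ p̂ log q`, and since
`q^(α-1)` and `log q` are similarly ordered, Chebyshev's sum inequality with weights `q` bounds
that by `H(q)`. Truncation: with `T = ∑_{i<K} p i ≤ 1`, `H(q) = H_{<K}(p) / T + log T`, and
because every kept entry exceeds every removed one, the removed mass has the larger mean
surprisal `-log p`, which makes `H_{<K}(p) / T < H(p)`.
-/

open Finset Real

variable {ι : Type*}

theorem MonovaryOn.weighted_sum_mul_sum_le {s : Finset ι} {μ f g : ι → ℝ}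
    (hfg : MonovaryOn f g s) (hμ : ∀ i ∈ s, 0 ≤ μ i) :
    (∑ i ∈ s, μ i * f i) * (∑ i ∈ s, μ i * g i) ≤
      (∑ i ∈ s, μ i) * ∑ i ∈ s, μ i * (f i * g i) := by
  set D : ι → ι → ℝ := fun i j => μ i * μ j * (f j * g j - f i * g j)
  have hgap : (∑ i ∈ s, μ i) * (∑ i ∈ s, μ i * (f i * g i)) -
      (∑ i ∈ s, μ i * f i) * (∑ i ∈ s, μ i * g i) = ∑ i ∈ s, ∑ j ∈ s, D i j := by
    rw [sum_mul_sum, sum_mul_sum, ← sum_sub_distrib]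
    exact sum_congr rfl fun i _ => by
      rw [← sum_sub_distrib]; exact sum_congr rfl fun j _ => by ring
  have hcov : 0 ≤ ∑ i ∈ s, ∑ j ∈ s, (D i j + D j i) :=
    sum_nonneg fun i hi => sum_nonneg fun j hj => by
      have := mul_nonneg (mul_nonneg (hμ i hi) (hμ j hj))
        (monovaryOn_iff_forall_mul_nonneg.1 hfg hi hj)
      linarith
  rw [sum_congr rfl fun i _ => sum_add_distrib, sum_add_distrib, sum_comm (f := fun i j => D j i),
    ← hgap] at hcov
  linarith

theorem sum_mul_log_le_sum_mul_log {s : Finset ι} {r q : ι → ℝ}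
    (hr : ∀ i ∈ s, 0 < r i) (hq : ∀ i ∈ s, 0 < q i)
    (hsum : ∑ i ∈ s, q i ≤ ∑ i ∈ s, r i) :
    ∑ i ∈ s, r i * log (q i) ≤ ∑ i ∈ s, r i * log (r i) := by
  have hterm : ∀ i ∈ s, r i * log (q i) - r i * log (r i) ≤ q i - r i := fun i hi => calc
    r i * log (q i) - r i * log (r i) = r i * log (q i / r i) := by
      rw [log_div (hq i hi).ne' (hr i hi).ne']; ring
    _ ≤ r i * (q i / r i - 1) :=
      mul_le_mul_of_nonneg_left (log_le_sub_one_of_pos (div_pos (hq i hi) (hr i hi))) (hr i hi).le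
    _ = q i - r i := by rw [mul_sub, mul_div_cancel₀ _ (hr i hi).ne', mul_one]
  have := sum_le_sum hterm
  rw [sum_sub_distrib, sum_sub_distrib] at this
  linarith

theorem sum_mul_log_div_sum_le_sum_rpow_mul_log_div_sum {s : Finset ι} {w : ι → ℝ} {α : ℝ}
    (hw : ∀ i ∈ s, 0 < w i) (hs : s.Nonempty) (hα : 1 ≤ α) :
    (∑ i ∈ s, w i * log (w i)) / ∑ i ∈ s, w i ≤
      (∑ i ∈ s, w i ^ α * log (w i)) / ∑ i ∈ s, w i ^ α := by
  have hpow : ∀ i ∈ s, w i * w i ^ (α - 1) = w i ^ α := fun i hi => by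
    rw [rpow_sub_one (hw i hi).ne', mul_div_cancel₀ _ (hw i hi).ne']
  have hmono : MonovaryOn (fun i => w i ^ (α - 1)) (fun i => log (w i)) s :=
    fun i hi j hj hij => rpow_le_rpow (hw i hi).le
      ((log_lt_log_iff (hw i hi) (hw j hj)).1 hij).le (by linarith)
  have hcheb := hmono.weighted_sum_mul_sum_le fun i hi => (hw i hi).le
  simp only [← mul_assoc] at hcheb
  rw [sum_congr rfl hpow, sum_congr rfl fun i hi => congrArg (· * log (w i)) (hpow i hi)] at hcheb
  rw [div_le_div_iff₀ (sum_pos hw hs) (sum_pos (fun i hi => rpow_pos_of_pos (hw i hi) α) hs)]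
  linarith

noncomputable def entropyOn (s : Finset ι) (q : ι → ℝ) : ℝ :=
  -∑ i ∈ s, q i * log (q i)

noncomputable def normalizeOn (s : Finset ι) (w : ι → ℝ) (i : ι) : ℝ :=
  w i / ∑ j ∈ s, w j

section normalizeOn

variable {s : Finset ι} {w : ι → ℝ}

theorem normalizeOn_pos (hw : ∀ i ∈ s, 0 < w i) {i : ι} (hi : i ∈ s) : 0 < normalizeOn s w i :=
  div_pos (hw i hi) (sum_pos hw ⟨i, hi⟩)

theorem sum_normalizeOn (hw : ∀ i ∈ s, 0 < w i) (hs : s.Nonempty) :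
    ∑ i ∈ s, normalizeOn s w i = 1 := by
  simp only [normalizeOn]
  rw [← sum_div, div_self (sum_pos hw hs).ne']

theorem sum_normalizeOn_mul (g : ι → ℝ) :
    ∑ i ∈ s, normalizeOn s w i * g i = (∑ i ∈ s, w i * g i) / ∑ i ∈ s, w i := by
  simp only [normalizeOn, div_mul_eq_mul_div, sum_div]

theorem sum_mul_log_normalizeOn (hw : ∀ i ∈ s, 0 < w i) (r : ι → ℝ) :
    ∑ i ∈ s, r i * log (normalizeOn s w i) =
      ∑ i ∈ s, r i * log (w i) - (∑ i ∈ s, r i) * log (∑ i ∈ s, w i) := by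
  rw [sum_mul, ← sum_sub_distrib]
  exact sum_congr rfl fun i hi => by
    rw [normalizeOn, log_div (hw i hi).ne' (sum_pos hw ⟨i, hi⟩).ne', mul_sub]

theorem entropyOn_normalizeOn (hw : ∀ i ∈ s, 0 < w i) (hs : s.Nonempty) :
    entropyOn s (normalizeOn s w) = entropyOn s w / (∑ i ∈ s, w i) + log (∑ i ∈ s, w i) := by
  rw [entropyOn, entropyOn, sum_mul_log_normalizeOn hw, sum_normalizeOn hw hs,
    sum_normalizeOn_mul]
  ring

end normalizeOn

theorem entropyOn_normalizeOn_rpow_le {s : Finset ι} {w : ι → ℝ} {α : ℝ}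
    (hw : ∀ i ∈ s, 0 < w i) (hα : 1 ≤ α) :
    entropyOn s (normalizeOn s fun i => w i ^ α) ≤ entropyOn s (normalizeOn s w) := by
  rcases s.eq_empty_or_nonempty with rfl | hs
  · simp [entropyOn]
  have hwα : ∀ i ∈ s, 0 < w i ^ α := fun i hi => rpow_pos_of_pos (hw i hi) α
  have hgibbs := sum_mul_log_le_sum_mul_log (fun i hi => normalizeOn_pos hwα hi)
    (fun i hi => normalizeOn_pos hw hi)
    (by rw [sum_normalizeOn hw hs, sum_normalizeOn hwα hs])
  rw [sum_mul_log_normalizeOn hw, sum_normalizeOn hwα hs, sum_normalizeOn_mul] at hgibbs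
  have hescort := sum_mul_log_div_sum_le_sum_rpow_mul_log_div_sum hw hs hα
  rw [entropyOn_normalizeOn hw hs, entropyOn, entropyOn, neg_div]
  linarith

theorem entropyOn_normalizeOn_lt_entropyOn_univ [Fintype ι] [DecidableEq ι] {s : Finset ι}
    {p : ι → ℝ} (hpos : ∀ i, 0 < p i) (hsum : ∑ i, p i = 1)
    (hs : s.Nonempty) (hsc : sᶜ.Nonempty)
    (hsmall : ∀ i ∈ s, ∀ j ∉ s, p j < p i) :
    entropyOn s (normalizeOn s p) < entropyOn univ p := by
  set T := ∑ i ∈ s, p i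
  have hT : 0 < T := sum_pos (fun i _ => hpos i) hs
  have hcompl : ∑ j ∈ sᶜ, p j = 1 - T := by rw [← hsum, ← sum_add_sum_compl s p]; ring
  have hcross : 0 < ∑ i ∈ s, ∑ j ∈ sᶜ, p i * p j * (log (p i) - log (p j)) :=
    sum_pos (fun i hi => sum_pos (fun j hj => mul_pos (mul_pos (hpos i) (hpos j))
      (sub_pos.2 (log_lt_log (hpos j) (hsmall i hi j (mem_compl.1 hj))))) hsc) hs
  have hexpand : ∑ i ∈ s, ∑ j ∈ sᶜ, p i * p j * (log (p i) - log (p j)) =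
      (∑ i ∈ s, p i * log (p i)) * (1 - T) - T * ∑ j ∈ sᶜ, p j * log (p j) := by
    rw [← hcompl, sum_mul_sum, sum_mul_sum, ← sum_sub_distrib]
    exact sum_congr rfl fun i _ => by
      rw [← sum_sub_distrib]; exact sum_congr rfl fun j _ => by ring
  have hlogT : log T ≤ 0 := log_nonpos hT.le (by linarith [sum_pos (fun i _ => hpos i) hsc])
  have hH : entropyOn s p / T < entropyOn univ p := by
    rw [div_lt_iff₀ hT, entropyOn, entropyOn, ← sum_add_sum_compl s]
    linarith
  rw [entropyOn_normalizeOn (fun i _ => hpos i) hs]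
  linarith

theorem entropy_tempered_topk_lt_general {n K : ℕ} (p : Fin n → ℝ) (α : ℝ)
    (hpos : ∀ i, 0 < p i) (hsum : ∑ i, p i = 1)
    (hdec : ∀ i j : Fin n, i < j → p j < p i)
    (hα : 1 ≤ α) (hK1 : 1 ≤ K) (hKn : K < n)
    (phat : Fin n → ℝ)
    (hphat : ∀ i : Fin n, phat i =
      (if (i : ℕ) < K then p i ^ α else 0) /
        ∑ j ∈ Finset.univ.filter (fun j : Fin n => (j : ℕ) < K), p j ^ α) :
    shannonEntropy phat < shannonEntropy p := by
  set F := univ.filter fun j : Fin n => (j : ℕ) < K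
  have hF : F.Nonempty := ⟨⟨0, by omega⟩, mem_filter.2 ⟨mem_univ _, hK1⟩⟩
  have hFc : Fᶜ.Nonempty := ⟨⟨K, hKn⟩, by simp [F]⟩
  have hphat_off : ∀ i ∉ F, phat i = 0 := fun i hi => by
    rw [hphat i, if_neg (by simpa [F] using hi), zero_div]
  have hphat_on : ∀ i ∈ F, phat i = normalizeOn F (fun j => p j ^ α) i := fun i hi => by
    rw [hphat i, if_pos (by simpa [F] using hi), normalizeOn]
  calc shannonEntropy phat = entropyOn F (normalizeOn F fun j => p j ^ α) := by
        rw [shannonEntropy, entropyOn,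
          ← sum_subset (subset_univ F) fun i _ hi => by rw [hphat_off i hi, zero_mul]]
        exact congrArg Neg.neg (sum_congr rfl fun i hi => by rw [hphat_on i hi])
    _ ≤ entropyOn F (normalizeOn F p) := entropyOn_normalizeOn_rpow_le (fun i _ => hpos i) hα
    _ < entropyOn univ p := entropyOn_normalizeOn_lt_entropyOn_univ hpos hsum hF hFc
        fun i hi j hj => hdec i j <| Fin.lt_def.2 <| by
          simp only [F, mem_filter, mem_univ, true_and] at hi hj; omega
    _ = shannonEntropy p := rfl

/-- Tempered top-k sampling strictly decreases entropy. -/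
theorem entropy_tempered_topk_lt {n K : ℕ} (p : Fin n → ℝ) (α : ℝ)
    (hn : 2 ≤ n)
    (hpos : ∀ i, 0 < p i) (hsum : ∑ i, p i = 1)
    (hdec : ∀ i j : Fin n, i < j → p j < p i)
    (hα : 1 ≤ α) (hK1 : 1 ≤ K) (hKn : K < n)
    (hnontriv : ¬ (α = 1 ∧ K = n))
    (phat : Fin n → ℝ)
    (hphat : ∀ i : Fin n, phat i =
      (if (i : ℕ) < K then p i ^ α else 0) /
        ∑ j ∈ Finset.univ.filter (fun j : Fin n => (j : ℕ) < K), p j ^ α) :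
    shannonEntropy phat < shannonEntropy p :=
  entropy_tempered_topk_lt_general p α hpos hsum hdec hα hK1 hKn phat hphat
end

section
/- Uniqueness of the target-entropy temperature: under the hypotheses that p : Fin n → ℝ is strictly positive and not uniform, the map α ↦ H(p^α) is strictly decreasing on (0, ∞); hence for each achievable entropy value E the solution α of H(p^α) = E is unique. -/
open Finset Real Set

/-!
With `x i = log (p i)` and `Z α = ∑ i, exp (α * x i)`, the tempered distribution is the Gibbs
distribution of `x`, and its entropy is `log Z α - α * g α` where `g = (log Z)'` is the Gibbs mean
of `x`. The mean `g` is strictly increasing when `x` is non-constant: `S b * Z a - S a * Z b`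
(with `S = Z'`) symmetrizes over pairs `(i, j)` into a sum of nonnegative terms. For `0 ≤ a < b`
the mean value theorem gives `log Z b - log Z a = (b - a) * g c` with `g c < g b`, hence
`H a - H b > a * (g b - g a) ≥ 0`.
-/

theorem StrictMono.strictAntiOn_sub_mul_of_hasDerivAt {f g : ℝ → ℝ}
    (hf : ∀ t, HasDerivAt f (g t) t) (hg : StrictMono g) :
    StrictAntiOn (fun t => f t - t * g t) (Ici 0) := by
  intro a ha b _ hab
  obtain ⟨c, hc, hslope⟩ := exists_hasDerivAt_eq_slope f g hab
    (fun t _ => (hf t).continuousAt.continuousWithinAt) (fun t _ => hf t)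
  have hmvt : f b - f a = (b - a) * g c := by
    rw [hslope, mul_div_cancel₀ _ (sub_pos.2 hab).ne']
  have hcb : (b - a) * g c < (b - a) * g b := mul_lt_mul_of_pos_left (hg hc.2) (sub_pos.2 hab)
  have hab' : a * g a ≤ a * g b := mul_le_mul_of_nonneg_left (hg hab).le ha
  show f b - b * g b < f a - a * g a
  linarith

section Gibbs

variable {ι : Type*} [Fintype ι] (x : ι → ℝ)

noncomputable def partitionFunction (α : ℝ) : ℝ :=
  ∑ i, exp (α * x i)

noncomputable def gibbsMean (α : ℝ) : ℝ :=
  (∑ i, x i * exp (α * x i)) / partitionFunction x α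

theorem partitionFunction_pos [Nonempty ι] (α : ℝ) : 0 < partitionFunction x α :=
  sum_pos (fun _ _ => exp_pos _) univ_nonempty

theorem hasDerivAt_partitionFunction (α : ℝ) :
    HasDerivAt (partitionFunction x) (∑ i, x i * exp (α * x i)) α := by
  refine HasDerivAt.fun_sum fun i _ => ?_
  simpa [mul_comm] using ((hasDerivAt_id α).mul_const (x i)).exp

theorem hasDerivAt_log_partitionFunction [Nonempty ι] (α : ℝ) :
    HasDerivAt (fun t => log (partitionFunction x t)) (gibbsMean x α) α :=
  (hasDerivAt_partitionFunction x α).log (partitionFunction_pos x α).ne'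

theorem sub_mul_exp_sub_exp_pos {a b u v : ℝ} (hab : a < b) (huv : u ≠ v) :
    0 < (u - v) * (exp (b * u + a * v) - exp (a * u + b * v)) := by
  rcases huv.lt_or_gt with h | h
  · exact mul_pos_of_neg_of_neg (sub_neg.2 h) (sub_neg.2 (exp_lt_exp.2 (by nlinarith)))
  · exact mul_pos (sub_pos.2 h) (sub_pos.2 (exp_lt_exp.2 (by nlinarith)))

theorem sub_mul_exp_sub_exp_nonneg {a b : ℝ} (hab : a < b) (u v : ℝ) :
    0 ≤ (u - v) * (exp (b * u + a * v) - exp (a * u + b * v)) := by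
  rcases eq_or_ne u v with rfl | huv
  · simp
  · exact (sub_mul_exp_sub_exp_pos hab huv).le

theorem gibbsMean_strictMono (hx : ∃ i j, x i ≠ x j) : StrictMono (gibbsMean x) := by
  obtain ⟨i₀, j₀, hne⟩ := hx
  have : Nonempty ι := ⟨i₀⟩
  intro a b hab
  set T : ι → ι → ℝ := fun i j => x i * (exp (b * x i + a * x j) - exp (a * x i + b * x j))
  -- Symmetrizing `T` pairs every `x i` with `x j` in a term of constant sign.
  have hpair : ∀ i j, T i j + T j i =
      (x i - x j) * (exp (b * x i + a * x j) - exp (a * x i + b * x j)) := by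
    intro i j
    simp only [T, add_comm (b * x j), add_comm (a * x j)]
    ring
  have hsymm : 0 < ∑ i, ∑ j, (T i j + T j i) := by
    simp only [hpair]
    exact sum_pos' (fun i _ => sum_nonneg fun j _ => sub_mul_exp_sub_exp_nonneg hab _ _)
      ⟨i₀, mem_univ _, sum_pos' (fun j _ => sub_mul_exp_sub_exp_nonneg hab _ _)
        ⟨j₀, mem_univ _, sub_mul_exp_sub_exp_pos hab hne⟩⟩
  have hdouble : ∑ i, ∑ j, (T i j + T j i) = 2 * ∑ i, ∑ j, T i j := by
    simp only [sum_add_distrib]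
    rw [sum_comm (f := fun i j => T j i)]
    ring
  have hcross : (∑ i, x i * exp (b * x i)) * partitionFunction x a -
      (∑ i, x i * exp (a * x i)) * partitionFunction x b = ∑ i, ∑ j, T i j := by
    simp only [partitionFunction, sum_mul_sum, ← sum_sub_distrib, T, exp_add]
    refine sum_congr rfl fun i _ => sum_congr rfl fun j _ => ?_
    ring
  rw [gibbsMean, gibbsMean, div_lt_div_iff₀ (partitionFunction_pos x a)
    (partitionFunction_pos x b)]
  linarith

end Gibbs

theorem shannonEntropy_gibbs {n : ℕ} [Nonempty (Fin n)] (x : Fin n → ℝ) (α : ℝ) :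
    shannonEntropy (fun i => exp (α * x i) / partitionFunction x α) =
      log (partitionFunction x α) - α * gibbsMean x α := by
  rw [gibbsMean]
  set Z := partitionFunction x α
  have hZ : Z ≠ 0 := (partitionFunction_pos x α).ne'
  have hterm : ∀ i, exp (α * x i) / Z * log (exp (α * x i) / Z) =
      (α * (x i * exp (α * x i)) - log Z * exp (α * x i)) / Z := fun i => by
    rw [log_div (exp_ne_zero _) hZ, log_exp]
    ring
  have hsum : ∑ i, exp (α * x i) = Z := rfl
  simp only [shannonEntropy, hterm, ← sum_div, sum_sub_distrib, ← mul_sum, hsum]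
  field_simp
  ring

theorem tempered_eq_gibbs {n : ℕ} {p : Fin n → ℝ} (hpos : ∀ i, 0 < p i) (α : ℝ) :
    tempered p α = fun i => exp (α * log (p i)) / partitionFunction (fun i => log (p i)) α := by
  have hrpow : ∀ i, p i ^ α = exp (α * log (p i)) := fun i => by
    rw [rpow_def_of_pos (hpos i), mul_comm]
  ext i
  simp only [tempered, partitionFunction, hrpow]

theorem target_entropy_temperature_unique_general {n : ℕ} (p : Fin n → ℝ)
    (hpos : ∀ i, 0 < p i)
    (hnonunif : ∃ i j : Fin n, p i ≠ p j) :
    StrictAntiOn (fun α : ℝ => shannonEntropy (tempered p α)) (Set.Ioi 0) ∧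
    ∀ E : ℝ, ∀ α ∈ Set.Ioi (0 : ℝ), ∀ β ∈ Set.Ioi (0 : ℝ),
      shannonEntropy (tempered p α) = E →
      shannonEntropy (tempered p β) = E → α = β := by
  obtain ⟨i₀, j₀, hne⟩ := hnonunif
  have : Nonempty (Fin n) := ⟨i₀⟩
  have hlog : ∃ i j, log (p i) ≠ log (p j) :=
    ⟨i₀, j₀, fun h => hne (log_injOn_pos (hpos i₀) (hpos j₀) h)⟩
  have hanti : StrictAntiOn (fun α => shannonEntropy (tempered p α)) (Ioi 0) := by
    have := ((gibbsMean_strictMono _ hlog).strictAntiOn_sub_mul_of_hasDerivAt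
      (hasDerivAt_log_partitionFunction _)).mono Ioi_subset_Ici_self
    simpa only [tempered_eq_gibbs hpos, shannonEntropy_gibbs] using this
  exact ⟨hanti, fun E α hα β hβ hαE hβE => hanti.injOn hα hβ (hαE.trans hβE.symm)⟩

/-- The map `α ↦ H(p^α)` is strictly decreasing on `(0, ∞)` when `p` is not
uniform; hence the target-entropy temperature is unique. -/
theorem target_entropy_temperature_unique {n : ℕ} (p : Fin n → ℝ)
    (hpos : ∀ i, 0 < p i) (hsum : ∑ i, p i = 1)
    (hnonunif : ∃ i j : Fin n, p i ≠ p j) :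
    StrictAntiOn (fun α : ℝ => shannonEntropy (tempered p α)) (Set.Ioi 0) ∧
    ∀ E : ℝ, ∀ α ∈ Set.Ioi (0 : ℝ), ∀ β ∈ Set.Ioi (0 : ℝ),
      shannonEntropy (tempered p α) = E →
      shannonEntropy (tempered p β) = E → α = β :=
  target_entropy_temperature_unique_general p hpos hnonunif
end

section
/- Slope preservation together with a fixed support determines the transformation up to a power and normalization: suppose p, p̂ : Fin n → ℝ are strictly positive probability vectors with n ≥ 3, all entries of p distinct, p̂ order-preserving relative to p, and satisfying the slope condition (log p̂_i - log p̂_j)/(log p̂_j - log p̂_k) = (log p_i - log p_j)/(log p_j - log p_k) for all i, j, k with p_i > p_j > p_k. Then there exist constants α > 0 and c ∈ ℝ such that log p̂_i = α · log p_i + c for all i; equivalently p̂_i = e^c · p_i^α. -/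
open Finset Real

/-- Slope preservation with full support determines the transformation up to a
power and a normalization: `log p̂ᵢ = α · log pᵢ + c` with `α > 0`. -/
theorem slope_preserving_is_tempered {n : ℕ} (hn : 3 ≤ n)
    (p phat : Fin n → ℝ)
    (hppos : ∀ i, 0 < p i) (hpsum : ∑ i, p i = 1)
    (hhpos : ∀ i, 0 < phat i) (hhsum : ∑ i, phat i = 1)
    (hdistinct : Function.Injective p)
    (horder : ∀ i j : Fin n, p i ≥ p j → phat i ≥ phat j)
    (hslope : ∀ i j k : Fin n, p i > p j → p j > p k →
      (Real.log (phat i) - Real.log (phat j)) /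
        (Real.log (phat j) - Real.log (phat k)) =
      (Real.log (p i) - Real.log (p j)) /
        (Real.log (p j) - Real.log (p k))) :
    ∃ α : ℝ, 0 < α ∧ ∃ c : ℝ,
      ∀ i : Fin n, Real.log (phat i) = α * Real.log (p i) + c := by
  -- abbreviations
  have hL : ∀ i j : Fin n, p i > p j → Real.log (p j) < Real.log (p i) := by
    intro i j h; exact Real.log_lt_log (hppos j) h
  have hHmono : ∀ i j : Fin n, p i ≥ p j → Real.log (phat j) ≤ Real.log (phat i) := by
    intro i j h
    exact Real.log_le_log (hhpos j) (horder i j h)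
  -- a third index always exists
  have hthird : ∀ i j : Fin n, ∃ k : Fin n, k ≠ i ∧ k ≠ j := by
    intro i j
    by_contra h
    push_neg at h
    have hsub : (Finset.univ : Finset (Fin n)) ⊆ {i, j} := by
      intro k _
      simp only [Finset.mem_insert, Finset.mem_singleton]
      by_contra hk
      push_neg at hk
      exact hk.2 (h k hk.1)
    have := Finset.card_le_card hsub
    simp only [Finset.card_univ, Fintype.card_fin] at this
    have h2 : ({i, j} : Finset (Fin n)).card ≤ 2 := by
      apply le_trans (Finset.card_insert_le _ _)
      simp
    omega
  -- strict monotonicity of phat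
  have hstrict : ∀ i j : Fin n, p i > p j → Real.log (phat j) < Real.log (phat i) := by
    intro i j hij
    rcases lt_or_eq_of_le (hHmono i j hij.le) with h | h
    · exact h
    exfalso
    obtain ⟨k, hki, hkj⟩ := hthird i j
    have hpki : p k ≠ p i := fun e => hki (hdistinct e)
    have hpkj : p k ≠ p j := fun e => hkj (hdistinct e)
    rcases lt_trichotomy (p k) (p j) with hk1 | hk1 | hk1
    · -- p i > p j > p k
      have hs := hslope i j k hij hk1
      have hrhs : 0 < (Real.log (p i) - Real.log (p j)) /
          (Real.log (p j) - Real.log (p k)) :=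
        div_pos (sub_pos.mpr (hL i j hij)) (sub_pos.mpr (hL j k hk1))
      rw [← hs] at hrhs
      rw [h, sub_self, zero_div] at hrhs
      exact lt_irrefl 0 hrhs
    · exact hpkj hk1
    · rcases lt_trichotomy (p k) (p i) with hk2 | hk2 | hk2
      · -- p i > p k > p j
        have hs := hslope i k j hk2 hk1
        have hrhs : 0 < (Real.log (p i) - Real.log (p k)) /
            (Real.log (p k) - Real.log (p j)) :=
          div_pos (sub_pos.mpr (hL i k hk2)) (sub_pos.mpr (hL k j hk1))
        rw [← hs] at hrhs
        have e1 : Real.log (phat k) = Real.log (phat i) :=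
          le_antisymm (hHmono i k hk2.le) (by rw [← h]; exact hHmono k j hk1.le)
        rw [e1, sub_self, zero_div] at hrhs
        exact lt_irrefl 0 hrhs
      · exact hpki hk2
      · -- p k > p i > p j
        have hs := hslope k i j hk2 hij
        have hrhs : 0 < (Real.log (p k) - Real.log (p i)) /
            (Real.log (p i) - Real.log (p j)) :=
          div_pos (sub_pos.mpr (hL k i hk2)) (sub_pos.mpr (hL i j hij))
        rw [← hs] at hrhs
        rw [h, sub_self, div_zero] at hrhs
        exact lt_irrefl 0 hrhs
  -- choose reference indices
  have h01 : (⟨0, by omega⟩ : Fin n) ≠ ⟨1, by omega⟩ := by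
    simp [Fin.ext_iff]
  have hp01 : p ⟨0, by omega⟩ ≠ p ⟨1, by omega⟩ := fun e => h01 (hdistinct e)
  obtain ⟨a, b, hab⟩ : ∃ a b : Fin n, p a > p b := by
    rcases lt_or_gt_of_ne hp01 with h | h
    · exact ⟨_, _, h⟩
    · exact ⟨_, _, h⟩
  set La := Real.log (p a) with hLa
  set Lb := Real.log (p b) with hLb
  set Ha := Real.log (phat a) with hHa
  set Hb := Real.log (phat b) with hHb
  have hLab : 0 < La - Lb := sub_pos.mpr (hL a b hab)
  have hHab : 0 < Ha - Hb := sub_pos.mpr (hstrict a b hab)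
  set α := (Ha - Hb) / (La - Lb) with hα
  have hαpos : 0 < α := div_pos hHab hLab
  have hkey : Ha - Hb = α * (La - Lb) := by
    rw [hα]; field_simp
  refine ⟨α, hαpos, Ha - α * La, ?_⟩
  intro i
  by_cases hia : i = a
  · subst hia; ring
  by_cases hib : i = b
  · rw [hib]
    have : Real.log (phat b) = Ha - α * (La - Lb) := by rw [← hkey]; ring
    rw [show Real.log (phat b) = Hb from rfl, show Real.log (p b) = Lb from rfl]
    linarith [hkey]
  have hpia : p i ≠ p a := fun e => hia (hdistinct e)
  have hpib : p i ≠ p b := fun e => hib (hdistinct e)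
  set Li := Real.log (p i) with hLi
  set Hi := Real.log (phat i) with hHi
  -- cross-multiplied slope equation helper
  have cross : ∀ x y z : Fin n, p x > p y → p y > p z →
      (Real.log (phat x) - Real.log (phat y)) * (Real.log (p y) - Real.log (p z)) =
      (Real.log (p x) - Real.log (p y)) * (Real.log (phat y) - Real.log (phat z)) := by
    intro x y z hxy hyz
    have hs := hslope x y z hxy hyz
    have hd1 : Real.log (phat y) - Real.log (phat z) ≠ 0 :=
      ne_of_gt (sub_pos.mpr (hstrict y z hyz))
    have hd2 : Real.log (p y) - Real.log (p z) ≠ 0 :=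
      ne_of_gt (sub_pos.mpr (hL y z hyz))
    exact (div_eq_div_iff hd1 hd2).mp hs
  rcases lt_trichotomy (p i) (p b) with hc | hc | hc
  · -- p a > p b > p i
    have e := cross a b i hab hc
    have hLbi : 0 < Lb - Li := sub_pos.mpr (hL b i hc)
    -- (Ha - Hb)(Lb - Li) = (La - Lb)(Hb - Hi)
    have : Hb - Hi = α * (Lb - Li) := by
      rw [hα]
      field_simp
      linarith [e]
    linarith [hkey, this]
  · exact absurd hc hpib
  · rcases lt_trichotomy (p i) (p a) with hc2 | hc2 | hc2
    · -- p a > p i > p b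
      have e := cross a i b hc2 hc
      have hLib : 0 < Li - Lb := sub_pos.mpr (hL i b hc)
      have hLai : 0 < La - Li := sub_pos.mpr (hL a i hc2)
      -- (Ha - Hi)(Li - Lb) = (La - Li)(Hi - Hb)
      have h1 : (Ha - Hi) * (Li - Lb) = (La - Li) * (Hi - Hb) := e
      have h2 : (Ha - Hi) + (Hi - Hb) = α * ((La - Li) + (Li - Lb)) := by
        have : La - Lb = (La - Li) + (Li - Lb) := by ring
        linarith [hkey]
      -- solve: Hi - Hb = α (Li - Lb)
      have h3 : Hi - Hb = α * (Li - Lb) := by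
        have hne : Li - Lb ≠ 0 := ne_of_gt hLib
        have : (Hi - Hb) * ((La - Li) + (Li - Lb)) =
            α * (Li - Lb) * ((La - Li) + (Li - Lb)) := by
          nlinarith [h1, h2]
        have hpos : (La - Li) + (Li - Lb) ≠ 0 := by positivity
        exact mul_right_cancel₀ hpos this
      linarith [hkey, h3]
    · exact absurd hc2 hpia
    · -- p i > p a > p b
      have e := cross i a b hc2 hab
      have hLia : 0 < Li - La := sub_pos.mpr (hL i a hc2)
      -- (Hi - Ha)(La - Lb) = (Li - La)(Ha - Hb)
      have : Hi - Ha = α * (Li - La) := by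
        rw [hα]
        field_simp
        linarith [e]
      linarith [this]
end
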